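/- Let X be a connected noncompact complex manifold of dimension > 1 and f = (f₁,…,f_q) : X → ℂ^q a nonconstant holomorphic map. Then for every compact K ⊆ X, the set X \ f⁻¹(f(K)) is nonempty and not relatively compact in X. -/

import Mathlib

/-!
Pick a coordinate `g` of `f` that is not constant on `U`. By the maximum modulus principle `g`
takes on `U` a value `g x₀` outside the compact set `g(K)`, so the fiber `{g = g x₀}` lies in
`U \ f⁻¹(f(K))`; if that set were relatively compact, the fiber would be compact.

A holomorphic function of at least two variables has no nonempty compact fiber. Choose linear
functionals `ℓ₁, ℓ₂` and vectors `v, w` with `ℓ₁ v = ℓ₂ w = 1` and `ℓ₁ w = 0`, take the point `p` of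
the fiber that is lexicographically maximal for `(Re ℓ₁, Re ℓ₂)`, and restrict `g` to the complex
lines `t ↦ p + c • v + t • w`. If `g - g p` vanishes identically near `p` on the line `c = 0`, the
fiber contains `p + s • w` for small `s > 0`, which beats `p` in `Re ℓ₂`. Otherwise `p` is an
isolated zero on that line, and by Hurwitz's argument the zero persists on the nearby lines with
small real `c > 0`, which beat `p` in `Re ℓ₁`.
-/

open Set Metric Filter Topology

theorem IsCompact.exists_isMaxOn_lex {X α β : Type*} [TopologicalSpace X]
    [LinearOrder α] [TopologicalSpace α] [OrderClosedTopology α]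
    [LinearOrder β] [TopologicalSpace β] [OrderClosedTopology β]
    {M : Set X} (hM : IsCompact M) (hne : M.Nonempty) {φ : X → α} {ψ : X → β}
    (hφ : Continuous φ) (hψ : Continuous ψ) :
    ∃ p ∈ M, IsMaxOn φ M p ∧ ∀ x ∈ M, φ x = φ p → ψ x ≤ ψ p := by
  obtain ⟨p₁, hp₁, hmax₁⟩ := hM.exists_isMaxOn hne hφ.continuousOn
  have hM₁ : IsCompact (M ∩ φ ⁻¹' {φ p₁}) := hM.inter_right (isClosed_singleton.preimage hφ)
  obtain ⟨p, ⟨hp, hpφ⟩, hmax₂⟩ := hM₁.exists_isMaxOn ⟨p₁, hp₁, rfl⟩ hψ.continuousOn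
  refine ⟨p, hp, fun x hx => ?_, fun x hx hxφ => hmax₂ ⟨hx, hxφ.trans hpφ⟩⟩
  rw [mem_preimage, mem_singleton_iff] at hpφ
  exact hpφ ▸ hmax₁ hx

theorem isCompact_inter_preimage_of_isCompact_closure_inter {X Y : Type*} [TopologicalSpace X]
    [T2Space X] [TopologicalSpace Y] [T1Space Y] {g : X → Y} {U S : Set X} {a : Y}
    (hg : ContinuousOn g U) (hS : U ∩ g ⁻¹' {a} ⊆ S) (hT : IsCompact (closure S ∩ U)) :
    IsCompact (U ∩ g ⁻¹' {a}) := by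
  have hclosed := (hg.mono inter_subset_right).preimage_isClosed_of_isClosed hT.isClosed
    (isClosed_singleton (x := a))
  have heq : closure S ∩ U ∩ g ⁻¹' {a} = U ∩ g ⁻¹' {a} :=
    Set.ext fun x => ⟨fun h => ⟨h.1.2, h.2⟩, fun h => ⟨⟨subset_closure (hS h), h.1⟩, h.2⟩⟩
  exact heq ▸ hT.of_isClosed_subset hclosed inter_subset_left

theorem exists_dual_pair_of_one_lt_finrank {E : Type*} [NormedAddCommGroup E] [NormedSpace ℂ E]
    (hE : 1 < Module.finrank ℂ E) :
    ∃ (ℓ₁ ℓ₂ : E →L[ℂ] ℂ) (v w : E), ℓ₁ v = 1 ∧ ℓ₁ w = 0 ∧ ℓ₂ w = 1 := by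
  have : FiniteDimensional ℂ E := Module.finite_of_finrank_pos (by omega)
  let b := Module.finBasis ℂ E
  let i : Fin (Module.finrank ℂ E) := ⟨0, by omega⟩
  let j : Fin (Module.finrank ℂ E) := ⟨1, hE⟩
  refine ⟨LinearMap.toContinuousLinearMap (b.coord i),
    LinearMap.toContinuousLinearMap (b.coord j), b i, b j, ?_, ?_, ?_⟩ <;>
    simp [i, j]

theorem exists_eq_zero_of_forall_mem_frontier_norm_lt {E : Type*} [NormedAddCommGroup E]
    [NormedSpace ℂ E] [Nontrivial E] [FiniteDimensional ℂ E] {F : E → ℂ} {U : Set E} {z₀ : E}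
    (hb : Bornology.IsBounded U) (hF : DiffContOnCl ℂ F U) (hz₀ : z₀ ∈ U)
    (hlt : ∀ z ∈ frontier U, ‖F z₀‖ < ‖F z‖) : ∃ z ∈ closure U, F z = 0 := by
  by_contra! hne
  obtain ⟨z, hz, hmax⟩ := Complex.exists_mem_frontier_isMaxOn_norm hb ⟨z₀, hz₀⟩ (hF.inv hne)
  have hle : ‖F z‖ ≤ ‖F z₀‖ := by
    simpa [norm_inv, inv_le_inv₀ (norm_pos_iff.2 (hne z₀ (subset_closure hz₀)))
      (norm_pos_iff.2 (hne z (frontier_subset_closure hz)))] using hmax (subset_closure hz₀)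
  exact (hlt z hz).not_ge hle

theorem eventually_exists_zero_of_isolated_zero {P : Type*} [TopologicalSpace P]
    {H : P × ℂ → ℂ} {c₀ : P} {z₀ : ℂ}
    (hH : ∀ᶠ q in 𝓝 (c₀, z₀), ContinuousAt H q ∧ DifferentiableAt ℂ (fun z => H (q.1, z)) q.2)
    (h0 : H (c₀, z₀) = 0) (hiso : ∀ᶠ z in 𝓝[≠] z₀, H (c₀, z) ≠ 0)
    {S : Set (P × ℂ)} (hS : S ∈ 𝓝 (c₀, z₀)) :
    ∀ᶠ c in 𝓝 c₀, ∃ z, (c, z) ∈ S ∧ H (c, z) = 0 := by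
  obtain ⟨A, B, hA, hc₀, hB, hz₀, hAB⟩ := mem_nhds_prod_iff'.1 (hH.and hS)
  obtain ⟨r, hr, hrB⟩ : ∃ r > 0, closedBall z₀ r ⊆ B ∩ {z | z ≠ z₀ → H (c₀, z) ≠ 0} :=
    nhds_basis_closedBall.mem_iff.1
      (inter_mem (hB.mem_nhds hz₀) (eventually_nhdsWithin_iff.1 hiso))
  have hsphere : ∀ᶠ c in 𝓝 c₀, ∀ z ∈ sphere z₀ r, ‖H (c, z₀)‖ < ‖H (c, z)‖ := by
    refine (isCompact_sphere z₀ r).eventually_forall_of_forall_eventually fun y hy => ?_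
    have hyB : y ∈ B ∩ {z | z ≠ z₀ → H (c₀, z) ≠ 0} := hrB (sphere_subset_closedBall hy)
    have hyz₀ : y ≠ z₀ := ne_of_mem_sphere hy hr.ne'
    have hcenter : ContinuousAt (fun q : P × ℂ => H (q.1, z₀)) (c₀, y) :=
      ((hAB ⟨hc₀, hz₀⟩).1.1).comp (f := fun q : P × ℂ => (q.1, z₀)) (by fun_prop)
    refine (hcenter.norm.eventually_lt (hAB ⟨hc₀, hyB.1⟩).1.1.norm ?_)
    simpa [h0] using hyB.2 hyz₀
  filter_upwards [hsphere, hA.mem_nhds hc₀] with c hc hcA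
  have hcl : ∀ z ∈ closure (ball z₀ r), (c, z) ∈ A ×ˢ B := fun z hz =>
    ⟨hcA, (hrB (closure_ball_subset_closedBall hz)).1⟩
  have hdiff : DiffContOnCl ℂ (fun z => H (c, z)) (ball z₀ r) :=
    DifferentiableOn.diffContOnCl fun z hz => ((hAB (hcl z hz)).1.2).differentiableWithinAt
  obtain ⟨z, hz, hHz⟩ := exists_eq_zero_of_forall_mem_frontier_norm_lt isBounded_ball hdiff
    (mem_ball_self hr) (by rwa [frontier_ball z₀ hr.ne'])
  exact ⟨z, (hAB (hcl z hz)).2, hHz⟩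

theorem exists_mem_image_notMem_image_of_isCompact {E F : Type*} [NormedAddCommGroup E]
    [NormedSpace ℂ E] [NormedAddCommGroup F] [NormedSpace ℂ F] [StrictConvexSpace ℝ F]
    {g : E → F} {U K : Set E} (hU : IsOpen U) (hUc : IsPreconnected U)
    (hg : DifferentiableOn ℂ g U) (hK : IsCompact K) (hKU : K ⊆ U)
    (hnc : ∃ x ∈ U, ∃ y ∈ U, g x ≠ g y) : ∃ x ∈ U, g x ∉ g '' K := by
  by_contra! h
  obtain ⟨x, hx, y, hy, hxy⟩ := hnc
  obtain ⟨_, ⟨k₀, hk₀, rfl⟩, hmax⟩ := (hK.image_of_continuousOn (hg.continuousOn.mono hKU)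
    ).exists_isMaxOn ⟨_, h x hx⟩ continuous_norm.continuousOn
  have hmaxU : IsMaxOn (norm ∘ g) U k₀ := fun z hz => by
    obtain ⟨k, hk, hkz⟩ := h z hz
    simpa [← hkz] using hmax ⟨k, hk, rfl⟩
  have hconst := Complex.eqOn_of_isPreconnected_of_isMaxOn_norm hUc hU hg (hKU hk₀) hmaxU
  exact hxy ((hconst hx).trans (hconst hy).symm)

theorem not_isCompact_inter_preimage_singleton {E : Type*} [NormedAddCommGroup E]
    [NormedSpace ℂ E] (hE : 1 < Module.finrank ℂ E) {U : Set E} (hU : IsOpen U) {g : E → ℂ}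
    (hg : DifferentiableOn ℂ g U) {a : ℂ} (hne : (U ∩ g ⁻¹' {a}).Nonempty) :
    ¬ IsCompact (U ∩ g ⁻¹' {a}) := by
  intro hM
  obtain ⟨ℓ₁, ℓ₂, v, w, hv, hw₁, hw₂⟩ := exists_dual_pair_of_one_lt_finrank hE
  obtain ⟨p, ⟨hpU, hpa⟩, hmax₁, hmax₂⟩ := hM.exists_isMaxOn_lex hne
    (φ := fun x => (ℓ₁ x).re) (ψ := fun x => (ℓ₂ x).re) (by fun_prop) (by fun_prop)
  set A : ℂ × ℂ → E := fun q => p + q.1 • v + q.2 • w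
  set H : ℂ × ℂ → ℂ := fun q => g (A q) - a
  have hA : Continuous A := by fun_prop
  have hAU : A ⁻¹' U ∈ 𝓝 ((0 : ℂ), (0 : ℂ)) :=
    hA.continuousAt.preimage_mem_nhds (by simpa [A] using hU.mem_nhds hpU)
  have hH : ∀ q ∈ A ⁻¹' U, DifferentiableAt ℂ H q := fun q hq =>
    ((hg.differentiableAt (hU.mem_nhds hq)).comp q (by fun_prop)).sub_const a
  have hpos : Tendsto (fun s : ℝ => (s : ℂ)) (𝓝[>] 0) (𝓝 0) := by
    simpa using (Complex.continuous_ofReal.tendsto 0).mono_left nhdsWithin_le_nhds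
  have hslice : Tendsto (fun t : ℂ => ((0 : ℂ), t)) (𝓝 0) (𝓝 (0, 0)) := by
    simpa using (Continuous.prodMk_right (0 : ℂ)).tendsto (0 : ℂ)
  have hAn : AnalyticAt ℂ (fun t => H (0, t)) 0 :=
    Complex.analyticAt_iff_eventually_differentiableAt.2 <|
      (hslice.eventually_mem hAU).mono fun t ht => (hH _ ht).comp t (by fun_prop)
  rcases hAn.eventually_eq_zero_or_eventually_ne_zero with hzero | hiso
  · obtain ⟨s, ⟨hsU, hsa⟩, hs⟩ := ((hpos.eventually
      ((hslice.eventually_mem hAU).and hzero)).and self_mem_nhdsWithin).exists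
    have hle := hmax₂ _ ⟨hsU, sub_eq_zero.1 hsa⟩ (by simp [A, hw₁])
    exact (show (0 : ℝ) < s from hs).not_ge (by simpa [A, hw₂] using hle)
  · have hzeros := eventually_exists_zero_of_isolated_zero
      (Filter.eventually_of_mem hAU fun q hq => ⟨(hH q hq).continuousAt,
        DifferentiableAt.comp (g := H) (f := fun z => (q.1, z)) q.2 (hH q hq) (by fun_prop)⟩)
      (by simpa [H, A] using sub_eq_zero.2 (show g p = a from hpa)) hiso hAU
    obtain ⟨u, ⟨t, htU, hHt⟩, hu⟩ := ((hpos.eventually hzeros).and self_mem_nhdsWithin).exists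
    have hle := hmax₁ ⟨htU, sub_eq_zero.1 hHt⟩
    exact (show (0 : ℝ) < u from hu).not_ge (by simpa [A, hv, hw₁] using hle)

theorem stmt_8_general (n q : ℕ) (hn : 1 < n)
    (U : Set (EuclideanSpace ℂ (Fin n)))
    (hU : IsOpen U) (hUc : IsConnected U)
    (f : EuclideanSpace ℂ (Fin n) → EuclideanSpace ℂ (Fin q))
    (hf : DifferentiableOn ℂ f U)
    (hnc : ¬ ∃ c, ∀ x ∈ U, f x = c)
    (K : Set (EuclideanSpace ℂ (Fin n))) (hK : IsCompact K) (hKU : K ⊆ U) :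
    (U \ f ⁻¹' (f '' K)).Nonempty ∧
      ¬ IsCompact (closure (U \ f ⁻¹' (f '' K)) ∩ U) := by
  obtain ⟨x, hx⟩ := hUc.nonempty
  obtain ⟨y, hy, hxy⟩ : ∃ y ∈ U, f y ≠ f x := by
    by_contra! h
    exact hnc ⟨f x, h⟩
  obtain ⟨j, hj⟩ : ∃ j, f y j ≠ f x j := by
    by_contra! h
    exact hxy (PiLp.ext h)
  set g : EuclideanSpace ℂ (Fin n) → ℂ := fun z => f z j
  have hg : DifferentiableOn ℂ g U :=
    (EuclideanSpace.proj (𝕜 := ℂ) j).differentiable.comp_differentiableOn hf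
  obtain ⟨x₀, hx₀, hx₀K⟩ := exists_mem_image_notMem_image_of_isCompact hU hUc.isPreconnected hg
    hK hKU ⟨y, hy, x, hx, hj⟩
  have hfiber : U ∩ g ⁻¹' {g x₀} ⊆ U \ f ⁻¹' (f '' K) := by
    refine fun z ⟨hz, hzx₀⟩ => ⟨hz, fun ⟨k, hk, hkz⟩ => ?_⟩
    exact hx₀K ⟨k, hk, (congrArg (· j) hkz).trans (show g z = g x₀ from hzx₀)⟩
  refine ⟨⟨x₀, hfiber ⟨hx₀, rfl⟩⟩, fun hT => ?_⟩
  exact not_isCompact_inter_preimage_singleton (by simpa using hn) hU hg ⟨x₀, hx₀, rfl⟩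
    (isCompact_inter_preimage_of_isCompact_closure_inter hg.continuousOn hfiber hT)

/-- Core of Proposition 1.4: on a connected noncompact complex manifold of
dimension `> 1` (here a connected open `U ⊆ ℂ^n`, `n > 1`), for a nonconstant
holomorphic map `f : U → ℂ^q` and any compact `K ⊆ U`, the set
`U \ f⁻¹(f(K))` is nonempty and not relatively compact in `U`. -/
theorem stmt_8 (n q : ℕ) (hn : 1 < n)
    (U : Set (EuclideanSpace ℂ (Fin n)))
    (hU : IsOpen U) (hUc : IsConnected U) (hUnc : ¬ IsCompact U)
    (f : EuclideanSpace ℂ (Fin n) → EuclideanSpace ℂ (Fin q))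
    (hf : DifferentiableOn ℂ f U)
    (hnc : ¬ ∃ c, ∀ x ∈ U, f x = c)
    (K : Set (EuclideanSpace ℂ (Fin n))) (hK : IsCompact K) (hKU : K ⊆ U) :
    (U \ f ⁻¹' (f '' K)).Nonempty ∧
      ¬ IsCompact (closure (U \ f ⁻¹' (f '' K)) ∩ U) :=
  stmt_8_general n q hn U hU hUc f hf hnc K hK hKU
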